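/- Suppose G is a finite simple vertex decomposable graph such that Shed(G) is not a dominating set of G. Let x ∈ Shed(G), and let H be the graph with vertex set V(H) = V(G) ∪ {x'} (x' a new vertex) and edge set E(H) = E(G) ∪ {{x', y} : y ∈ N_G[x]} (so x' is adjacent to x and to every neighbour of x). Then H is vertex decomposable and Shed(H) is not a dominating set of H. -/

import Mathlib

open scoped Classical

variable {V : Type*}

/-- `S` is an independent set of the induced subgraph of `G` on the vertex set `A`. -/
def IsIndepIn (G : SimpleGraph V) (A S : Finset V) : Prop :=
  S ⊆ A ∧ ∀ u ∈ S, ∀ v ∈ S, ¬ G.Adj u v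

/-- `S` is a maximal independent set of the induced subgraph of `G` on the vertex set `A`. -/
def IsMaxIndepIn (G : SimpleGraph V) (A S : Finset V) : Prop :=
  IsIndepIn G A S ∧ ∀ T, IsIndepIn G A T → S ⊆ T → T = S

/-- The induced subgraph of `G` on the vertex set `A` is well-covered: all of its
maximal independent sets have the same cardinality. -/
def WellCoveredOn (G : SimpleGraph V) (A : Finset V) : Prop :=
  ∀ S T, IsMaxIndepIn G A S → IsMaxIndepIn G A T → S.card = T.card

/-- The closed neighbourhood of `x` deleted from `A`: the vertices of `A` distinct from `x`
and not adjacent to `x`. -/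
noncomputable def delClosedNbhd (G : SimpleGraph V) (A : Finset V) (x : V) : Finset V :=
  A.filter fun y => y ≠ x ∧ ¬ G.Adj x y

/-- The induced subgraph of `G` on the vertex set `A` is vertex decomposable: it is
well-covered, and either it has no edges, or some vertex `x ∈ A` is such that deleting `x`,
respectively the closed neighbourhood of `x`, leaves a vertex decomposable graph. -/
def VertexDecomposableOn (G : SimpleGraph V) (A : Finset V) : Prop :=
  WellCoveredOn G A ∧
    ((∀ u ∈ A, ∀ v ∈ A, ¬ G.Adj u v) ∨
      ∃ x, ∃ _h : x ∈ A,
        VertexDecomposableOn G (A.erase x) ∧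
        VertexDecomposableOn G (delClosedNbhd G A x))
termination_by A.card
decreasing_by
  · exact Finset.card_erase_lt_of_mem (by assumption)
  · exact Finset.card_lt_card
      (Finset.filter_ssubset.mpr ⟨x, by assumption, by simp⟩)

/-- A finite simple graph is well-covered if all of its maximal independent sets have the
same cardinality. -/
def WellCovered (G : SimpleGraph V) [Fintype V] : Prop :=
  WellCoveredOn G Finset.univ

/-- A finite simple graph is vertex decomposable. -/
def VertexDecomposable (G : SimpleGraph V) [Fintype V] : Prop :=
  VertexDecomposableOn G Finset.univ

/-- The set of shedding vertices of `G` : those vertices `x` such that both `G \ x` and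
`G \ N[x]` are vertex decomposable. -/
def Shed (G : SimpleGraph V) [Fintype V] : Set V :=
  {x | VertexDecomposableOn G (Finset.univ.erase x) ∧
       VertexDecomposableOn G (delClosedNbhd G Finset.univ x)}

/-- `D` is a dominating set of `G`: every vertex not in `D` is adjacent to a vertex of `D`. -/
def IsDominatingSet (G : SimpleGraph V) (D : Set V) : Prop :=
  ∀ v, v ∉ D → ∃ u ∈ D, G.Adj u v

/-- A vertex is simplicial if its neighbourhood induces a clique. -/
def IsSimplicialVertex (G : SimpleGraph V) (x : V) : Prop :=
  ∀ u v, G.Adj x u → G.Adj x v → u ≠ v → G.Adj u v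

/-- The graph `H` obtained from `G` by duplicating the vertex `x`: the new vertex `x'`
(represented by `none`) is adjacent to `x` and to every neighbour of `x`, and all edges of
`G` are kept among the old vertices (represented via `some`). -/
def dupVertex {V : Type*} (G : SimpleGraph V) (x : V) : SimpleGraph (Option V) :=
  SimpleGraph.fromRel fun p q =>
    match p, q with
    | some u, some v => G.Adj u v
    | none, some v => v = x ∨ G.Adj x v
    | _, _ => False

/-!
In `H = dupVertex G x` the vertices `x` and `x'` are true twins (adjacent, with the same other
neighbours), so swapping them is an automorphism of `H`. Deleting one of two true twins preserves
vertex decomposability: maximal independent sets before and after the deletion correspond with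
their sizes (swap `x'` out of a set containing it), and any other shedding vertex stays one.
As `H \ x' ≅ G` and `H \ N[x'] ≅ G \ N[x]`, `x'` is a shedding vertex of `H`. For `y ∈ Shed H`
other than the twins, deleting `x'` from `H \ y` and `H \ N[y]` leaves `G \ y` and `G \ N[y]`,
so `y ∈ Shed G`; hence a vertex not dominated by `Shed G` is not dominated by `Shed H`.
-/

open Finset

section Basic

variable {G : SimpleGraph V} {A S : Finset V}

theorem vertexDecomposableOn_iff :
    VertexDecomposableOn G A ↔ WellCoveredOn G A ∧
      ((∀ u ∈ A, ∀ v ∈ A, ¬ G.Adj u v) ∨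
        ∃ x, ∃ _h : x ∈ A,
          VertexDecomposableOn G (A.erase x) ∧ VertexDecomposableOn G (delClosedNbhd G A x)) := by
  rw [VertexDecomposableOn]

theorem delClosedNbhd_ssubset {x : V} (hx : x ∈ A) : delClosedNbhd G A x ⊂ A :=
  filter_ssubset.mpr ⟨x, hx, by simp⟩

theorem delClosedNbhd_erase (x y : V) :
    delClosedNbhd G (A.erase y) x = (delClosedNbhd G A x).erase y := by
  ext; simp only [delClosedNbhd, mem_filter, mem_erase]; tauto

theorem isMaxIndepIn_iff :
    IsMaxIndepIn G A S ↔ IsIndepIn G A S ∧ ∀ v ∈ A, v ∉ S → ∃ u ∈ S, G.Adj u v := by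
  refine ⟨fun h => ⟨h.1, fun v hv hvS => ?_⟩, fun ⟨hS, hdom⟩ => ⟨hS, fun T hT hST => ?_⟩⟩
  · by_contra! hv'
    have hins : IsIndepIn G A (insert v S) := by
      refine ⟨insert_subset hv h.1.1, ?_⟩
      simp only [mem_insert]
      rintro u (rfl | hu) w (rfl | hw) huw
      · exact G.irrefl huw
      · exact hv' w hw huw.symm
      · exact hv' u hu huw
      · exact h.1.2 u hu w hw huw
    exact hvS (h.2 _ hins (subset_insert v S) ▸ mem_insert_self v S)
  · refine Subset.antisymm (fun t ht => ?_) hST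
    by_contra htS
    obtain ⟨u, hu, hut⟩ := hdom t (hT.1 ht) htS
    exact hT.2 u (hST hu) t ht hut

theorem IsMaxIndepIn.erase_of_notMem {b : V} (hS : IsMaxIndepIn G A S) (hb : b ∉ S) :
    IsMaxIndepIn G (A.erase b) S := by
  rw [isMaxIndepIn_iff] at hS ⊢
  obtain ⟨⟨hSA, hind⟩, hdom⟩ := hS
  exact ⟨⟨fun s hs => mem_erase.2 ⟨fun h => hb (h ▸ hs), hSA hs⟩, hind⟩,
    fun v hv => hdom v (mem_of_mem_erase hv)⟩

end Basic

section Embedding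

variable {W : Type*} {G : SimpleGraph V} {G' : SimpleGraph W} (f : G ↪g G') {A S : Finset V}

theorem isMaxIndepIn_map_iff :
    IsMaxIndepIn G' (A.map f.toEmbedding) (S.map f.toEmbedding) ↔ IsMaxIndepIn G A S := by
  simp [isMaxIndepIn_iff, IsIndepIn]

theorem wellCoveredOn_map_iff : WellCoveredOn G' (A.map f.toEmbedding) ↔ WellCoveredOn G A := by
  refine ⟨fun h S T hS hT => ?_, fun h S' T' hS' hT' => ?_⟩
  · simpa using h _ _ ((isMaxIndepIn_map_iff f).2 hS) ((isMaxIndepIn_map_iff f).2 hT)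
  · obtain ⟨S, -, rfl⟩ := subset_map_iff.1 hS'.1.1
    obtain ⟨T, -, rfl⟩ := subset_map_iff.1 hT'.1.1
    simpa using h S T ((isMaxIndepIn_map_iff f).1 hS') ((isMaxIndepIn_map_iff f).1 hT')

theorem delClosedNbhd_map (x : V) :
    delClosedNbhd G' (A.map f.toEmbedding) (f x) = (delClosedNbhd G A x).map f.toEmbedding := by
  simp [delClosedNbhd, filter_map]

theorem vertexDecomposableOn_map_iff :
    VertexDecomposableOn G' (A.map f.toEmbedding) ↔ VertexDecomposableOn G A := by
  induction A using Finset.strongInduction with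
  | H A ih =>
    rw [vertexDecomposableOn_iff, vertexDecomposableOn_iff, wellCoveredOn_map_iff]
    have step : ∀ z ∈ A, (VertexDecomposableOn G' ((A.map f.toEmbedding).erase (f z)) ∧
        VertexDecomposableOn G' (delClosedNbhd G' (A.map f.toEmbedding) (f z))) ↔
        (VertexDecomposableOn G (A.erase z) ∧ VertexDecomposableOn G (delClosedNbhd G A z)) :=
      fun z hz => by
        rw [delClosedNbhd_map, show (A.map f.toEmbedding).erase (f z) = (A.erase z).map f.toEmbedding
          from (map_erase _ _ _).symm, ih _ (erase_ssubset hz), ih _ (delClosedNbhd_ssubset hz)]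
    refine and_congr Iff.rfl (or_congr (by simp) ⟨fun ⟨_, hz', h⟩ => ?_, fun ⟨z, hz, h⟩ => ?_⟩)
    · obtain ⟨z, hz, rfl⟩ := mem_map.1 hz'
      exact ⟨z, hz, (step z hz).1 h⟩
    · exact ⟨f z, mem_map_of_mem _ hz, (step z hz).2 h⟩

end Embedding

structure AreTrueTwins (G : SimpleGraph V) (a b : V) : Prop where
  adj : G.Adj a b
  adj_iff : ∀ w, w ≠ a → w ≠ b → (G.Adj a w ↔ G.Adj b w)

namespace AreTrueTwins

variable {G : SimpleGraph V} {a b : V} (h : AreTrueTwins G a b) {A S : Finset V}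
include h

noncomputable def swap : G ↪g G where
  toEmbedding := (Equiv.swap a b).toEmbedding
  map_rel_iff' {u v} := by
    have hab := h.adj
    have htw := h.adj_iff
    simp only [Equiv.toEmbedding_apply, Equiv.swap_apply_def]
    split_ifs <;> subst_vars <;> grind [SimpleGraph.adj_comm, SimpleGraph.irrefl]

theorem map_swap (ha : a ∈ A) (hb : b ∈ A) : A.map h.swap.toEmbedding = A :=
  map_perm fun c hc => by
    obtain ⟨-, rfl | rfl⟩ := Equiv.swap_apply_ne_self_iff.1 hc <;> assumption

theorem map_swap_erase (ha : a ∈ A) (hb : b ∈ A) :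
    (A.erase a).map h.swap.toEmbedding = A.erase b := by
  rw [map_erase, h.map_swap ha hb]
  exact congrArg _ (Equiv.swap_apply_left a b)

theorem isMaxIndepIn_of_erase (ha : a ∈ A) (hS : IsMaxIndepIn G (A.erase b) S) :
    IsMaxIndepIn G A S := by
  rw [isMaxIndepIn_iff] at hS ⊢
  obtain ⟨⟨hSA, hind⟩, hdom⟩ := hS
  refine ⟨⟨hSA.trans (erase_subset b A), hind⟩, fun v hv hvS => ?_⟩
  rcases eq_or_ne v b with rfl | hvb
  · by_cases haS : a ∈ S
    · exact ⟨a, haS, h.adj⟩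
    obtain ⟨u, hu, hua⟩ := hdom a (mem_erase.2 ⟨h.adj.ne, ha⟩) haS
    have hub : u ≠ v := (mem_erase.1 (hSA hu)).1
    exact ⟨u, hu, ((h.adj_iff u (fun e => haS (e ▸ hu)) hub).1 hua.symm).symm⟩
  · exact hdom v (mem_erase.2 ⟨hvb, hv⟩) hvS

theorem exists_isMaxIndepIn_erase (ha : a ∈ A) (hS : IsMaxIndepIn G A S) :
    ∃ T, IsMaxIndepIn G (A.erase b) T ∧ T.card = S.card := by
  by_cases hbS : b ∈ S
  · have haS : a ∉ S := fun haS => hS.1.2 a haS b hbS h.adj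
    refine ⟨S.map h.swap.toEmbedding, IsMaxIndepIn.erase_of_notMem ?_ ?_, card_map _⟩
    · rw [← h.map_swap ha (hS.1.1 hbS)]
      exact (isMaxIndepIn_map_iff _).2 hS
    · rintro hb
      obtain ⟨c, hc, hcb⟩ := mem_map.1 hb
      rw [show c = a from (Equiv.swap_apply_eq_iff.1 hcb).trans (Equiv.swap_apply_right a b)] at hc
      exact haS hc
  · exact ⟨S, hS.erase_of_notMem hbS, rfl⟩

theorem wellCoveredOn_erase_iff (ha : a ∈ A) : WellCoveredOn G (A.erase b) ↔ WellCoveredOn G A := by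
  refine ⟨fun hwc S T hS hT => ?_, fun hwc S T hS hT =>
    hwc S T (h.isMaxIndepIn_of_erase ha hS) (h.isMaxIndepIn_of_erase ha hT)⟩
  obtain ⟨S', hS', hcS⟩ := h.exists_isMaxIndepIn_erase ha hS
  obtain ⟨T', hT', hcT⟩ := h.exists_isMaxIndepIn_erase ha hT
  rw [← hcS, ← hcT]
  exact hwc S' T' hS' hT'

theorem vertexDecomposableOn_erase (hA : b ∈ A → a ∈ A) (hvd : VertexDecomposableOn G A) :
    VertexDecomposableOn G (A.erase b) := by
  induction A using Finset.strongInduction with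
  | H A ih =>
  by_cases hb : b ∈ A
  swap
  · rwa [erase_eq_of_notMem hb]
  have ha := hA hb
  rw [vertexDecomposableOn_iff] at hvd
  obtain ⟨hwc, hedgeless | ⟨z, hz, h1, h2⟩⟩ := hvd
  · exact absurd h.adj (hedgeless a ha b hb)
  rcases eq_or_ne z b with rfl | hzb
  · exact h1
  rcases eq_or_ne z a with rfl | hza
  -- shedding `a` is shedding `b` up to the swap automorphism
  · rw [← h.map_swap_erase ha hb]
    exact (vertexDecomposableOn_map_iff h.swap).2 h1
  rw [vertexDecomposableOn_iff]
  refine ⟨(h.wellCoveredOn_erase_iff ha).2 hwc, Or.inr ⟨z, mem_erase.2 ⟨hzb, hz⟩, ?_, ?_⟩⟩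
  · rw [erase_right_comm]
    exact ih _ (erase_ssubset hz) (fun _ => mem_erase.2 ⟨hza.symm, ha⟩) h1
  · rw [delClosedNbhd_erase]
    refine ih _ (delClosedNbhd_ssubset hz) (fun hbD => ?_) h2
    obtain ⟨-, -, hzb'⟩ := mem_filter.1 hbD
    exact mem_filter.2 ⟨ha, hza.symm, fun hza' => hzb' ((h.adj_iff z hza hzb).1 hza'.symm).symm⟩

end AreTrueTwins

section DupVertex

-- `Finset.erase` in `Shed` uses the classical instance, not the one derived for `Option`.
noncomputable local instance : DecidableEq (Option V) := fun a b => Classical.propDecidable (a = b)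

variable (G : SimpleGraph V) (x : V)

@[simp]
theorem dupVertex_adj_some_some {u v : V} :
    (dupVertex G x).Adj (some u) (some v) ↔ G.Adj u v := by
  simp only [dupVertex, SimpleGraph.fromRel_adj, ne_eq, Option.some.injEq]
  exact ⟨fun ⟨_, h⟩ => h.elim id G.adj_symm, fun h => ⟨h.ne, Or.inl h⟩⟩

@[simp]
theorem dupVertex_adj_none_some {v : V} :
    (dupVertex G x).Adj none (some v) ↔ v = x ∨ G.Adj x v := by
  simp [dupVertex]

def dupVertexEmbedding : G ↪g dupVertex G x where
  toEmbedding := Function.Embedding.some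
  map_rel_iff' := dupVertex_adj_some_some G x

theorem areTrueTwins_dupVertex : AreTrueTwins (dupVertex G x) (some x) none where
  adj := ((dupVertex_adj_none_some G x).2 (Or.inl rfl)).symm
  adj_iff
    | none, _, h => absurd rfl h
    | some w, h, _ => by simp_all

variable [Fintype V]

theorem univ_erase_none :
    (univ : Finset (Option V)).erase none = univ.map (dupVertexEmbedding G x).toEmbedding := by
  ext (_ | v) <;> simp [dupVertexEmbedding]

theorem delClosedNbhd_dupVertex_none :
    delClosedNbhd (dupVertex G x) univ none =
      (delClosedNbhd G univ x).map (dupVertexEmbedding G x).toEmbedding := by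
  ext (_ | v) <;> simp [delClosedNbhd, dupVertexEmbedding]

theorem univ_erase_some_erase_none (w : V) :
    ((univ : Finset (Option V)).erase (some w)).erase none =
      (univ.erase w).map (dupVertexEmbedding G x).toEmbedding := by
  ext (_ | v) <;> simp [dupVertexEmbedding]

theorem delClosedNbhd_dupVertex_some_erase_none (w : V) :
    (delClosedNbhd (dupVertex G x) univ (some w)).erase none =
      (delClosedNbhd G univ w).map (dupVertexEmbedding G x).toEmbedding := by
  ext (_ | v) <;> simp [delClosedNbhd, dupVertexEmbedding]

variable {G x}

theorem vertexDecomposable_dupVertex (hvd : VertexDecomposable G) (hx : x ∈ Shed G) :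
    VertexDecomposable (dupVertex G x) := by
  have hdel : VertexDecomposableOn (dupVertex G x) (univ.erase none) := by
    rwa [univ_erase_none, vertexDecomposableOn_map_iff]
  rw [VertexDecomposable, vertexDecomposableOn_iff,
    ← (areTrueTwins_dupVertex G x).wellCoveredOn_erase_iff (mem_univ _)]
  refine ⟨(vertexDecomposableOn_iff.1 hdel).1, Or.inr ⟨none, mem_univ _, hdel, ?_⟩⟩
  rw [delClosedNbhd_dupVertex_none, vertexDecomposableOn_map_iff]
  exact hx.2

theorem mem_shed_of_some_mem_shed_dupVertex {w : V} (hw : w ≠ x)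
    (h : some w ∈ Shed (dupVertex G x)) : w ∈ Shed G := by
  have htw := areTrueTwins_dupVertex G x
  have hxw : some x ≠ some w := by simpa using hw.symm
  constructor
  · have := htw.vertexDecomposableOn_erase (fun _ => mem_erase.2 ⟨hxw, mem_univ _⟩) h.1
    rwa [univ_erase_some_erase_none, vertexDecomposableOn_map_iff] at this
  · refine (vertexDecomposableOn_map_iff (dupVertexEmbedding G x)).1 ?_
    rw [← delClosedNbhd_dupVertex_some_erase_none]
    refine htw.vertexDecomposableOn_erase (fun hn => ?_) h.2
    simp_all [delClosedNbhd, (dupVertex G x).adj_comm (some w)]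

theorem isDominatingSet_shed_of_dupVertex (hx : x ∈ Shed G)
    (hdom : IsDominatingSet (dupVertex G x) (Shed (dupVertex G x))) :
    IsDominatingSet G (Shed G) := by
  intro v hvS
  have hvx : v ≠ x := fun h => hvS (h ▸ hx)
  obtain ⟨_ | w, hwS, hwv⟩ := hdom (some v) (hvS ∘ mem_shed_of_some_mem_shed_dupVertex hvx)
  · rcases (dupVertex_adj_none_some G x).1 hwv with rfl | hxv
    exacts [absurd rfl hvx, ⟨x, hx, hxv⟩]
  · rw [dupVertex_adj_some_some] at hwv
    by_cases hwx : w = x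
    · exact ⟨x, hx, hwx ▸ hwv⟩
    · exact ⟨w, mem_shed_of_some_mem_shed_dupVertex hwx hwS, hwv⟩

end DupVertex

/-- If `G` is vertex decomposable and `Shed(G)` is not a dominating set, and
`x ∈ Shed(G)`, then the graph `H` obtained from `G` by duplicating `x` is vertex
decomposable and `Shed(H)` is not a dominating set of `H`. -/
theorem statement18 {V : Type*} [Fintype V] (G : SimpleGraph V)
    (hvd : VertexDecomposable G) (hnd : ¬ IsDominatingSet G (Shed G))
    (x : V) (hx : x ∈ Shed G) :
    VertexDecomposable (dupVertex G x) ∧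
    ¬ IsDominatingSet (dupVertex G x) (Shed (dupVertex G x)) :=
  ⟨vertexDecomposable_dupVertex hvd hx, fun hdom => hnd (isDominatingSet_shed_of_dupVertex hx hdom)⟩
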